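/- For every integer n ≥ 1, the learning-rate weights satisfy max_{1 ≤ i ≤ n} α_n^i ≤ 2H/n and Σ_{i=1}^n (α_n^i)² ≤ 2H/n. -/

import Mathlib

open scoped BigOperators

noncomputable section

/-- The per-step learning rate `α_t = (H+1)/(H+t)`. -/
def alphaT (H t : ℕ) : ℝ := (H + 1) / (H + t)

/-- The aggregated learning-rate weights `α_n^i`:
`α_0^0 = 1`, `α_n^0 = 0` for `n ≥ 1`, and `α_n^i = α_i ∏_{j=i+1}^n (1 - α_j)` for `1 ≤ i ≤ n`. -/
def alphaW (H n i : ℕ) : ℝ :=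
  if i = 0 then (if n = 0 then 1 else 0)
  else alphaT H i * ∏ j ∈ Finset.Icc (i + 1) n, (1 - alphaT H j)

/-!
For `i ≤ n` the weights satisfy `α_{n+1}^i = α_n^i (1 - α_{n+1})` and `α_{n+1}^{n+1} = α_{n+1}`.
Together with `α_n (1 - α_{n+1}) ≤ α_{n+1}` this gives, by induction on `n`, `α_n^i ≤ α_n ≤ 2H/n`,
and it shows that `α_n^1, …, α_n^n` sum to `1`; a sum of squares of nonnegative weights summing
to `1` is at most their maximum.
-/

open Finset

theorem Finset.sum_sq_le_mul_sum {ι R : Type*} [CommSemiring R] [PartialOrder R]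
    [IsOrderedRing R] (s : Finset ι) (f : ι → R) (M : R) (hf₀ : ∀ i ∈ s, 0 ≤ f i)
    (hfM : ∀ i ∈ s, f i ≤ M) : ∑ i ∈ s, f i ^ 2 ≤ M * ∑ i ∈ s, f i := by
  rw [mul_sum]
  exact sum_le_sum fun i hi => by
    rw [sq]; exact mul_le_mul_of_nonneg_right (hfM i hi) (hf₀ i hi)

section LearningRate

variable (H : ℕ)

lemma alphaT_nonneg (t : ℕ) : 0 ≤ alphaT H t := by
  unfold alphaT; positivity

lemma alphaT_le_one {t : ℕ} (ht : 1 ≤ t) : alphaT H t ≤ 1 := by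
  unfold alphaT
  exact div_le_one_of_le₀ (by gcongr; exact_mod_cast ht) (by positivity)

lemma alphaT_one : alphaT H 1 = 1 := by
  unfold alphaT; push_cast; exact div_self (by positivity)

lemma one_sub_alphaT_succ (t : ℕ) : 1 - alphaT H (t + 1) = t / (H + t + 1) := by
  unfold alphaT; push_cast; field_simp; ring

lemma alphaT_le_two_mul_div (hH : 1 ≤ H) {n : ℕ} (hn : 1 ≤ n) : alphaT H n ≤ 2 * H / n := by
  unfold alphaT
  have hH' : (1 : ℝ) ≤ H := by exact_mod_cast hH
  have hn' : (1 : ℝ) ≤ n := by exact_mod_cast hn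
  rw [div_le_div_iff₀ (by linarith) (by linarith)]
  nlinarith

lemma alphaT_mul_one_sub_alphaT_succ_le (n : ℕ) :
    alphaT H n * (1 - alphaT H (n + 1)) ≤ alphaT H (n + 1) := by
  have hswap : alphaT H n * (1 - alphaT H (n + 1)) = alphaT H (n + 1) * (n / (H + n)) := by
    rw [one_sub_alphaT_succ]; unfold alphaT; push_cast; ring
  rw [hswap]
  exact mul_le_of_le_one_right (alphaT_nonneg H _) (div_le_one_of_le₀ (by simp) (by positivity))

lemma alphaW_nonneg (n i : ℕ) : 0 ≤ alphaW H n i := by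
  unfold alphaW
  split_ifs
  · exact zero_le_one
  · exact le_rfl
  · refine mul_nonneg (alphaT_nonneg H i) (prod_nonneg fun j hj => ?_)
    exact sub_nonneg.mpr (alphaT_le_one H (by grind))

lemma alphaW_self {n : ℕ} (hn : n ≠ 0) : alphaW H n n = alphaT H n := by
  simp [alphaW, hn]

lemma alphaW_succ {n i : ℕ} (hi : 1 ≤ i) (hin : i ≤ n) :
    alphaW H (n + 1) i = alphaW H n i * (1 - alphaT H (n + 1)) := by
  rw [alphaW, alphaW, if_neg (by omega), if_neg (by omega),
    prod_Icc_succ_top (by omega : i + 1 ≤ n + 1), mul_assoc]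

lemma alphaW_le_alphaT {n i : ℕ} (hi : 1 ≤ i) (hin : i ≤ n) : alphaW H n i ≤ alphaT H n := by
  induction n, hin using Nat.le_induction with
  | base => exact (alphaW_self H (by omega)).le
  | succ n hin ih =>
    rw [alphaW_succ H hi hin]
    calc alphaW H n i * (1 - alphaT H (n + 1))
        ≤ alphaT H n * (1 - alphaT H (n + 1)) :=
          mul_le_mul_of_nonneg_right ih (sub_nonneg.mpr (alphaT_le_one H (by omega)))
      _ ≤ alphaT H (n + 1) := alphaT_mul_one_sub_alphaT_succ_le H n

lemma sum_alphaW_eq_one {n : ℕ} (hn : 1 ≤ n) : ∑ i ∈ Icc 1 n, alphaW H n i = 1 := by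
  induction n, hn using Nat.le_induction with
  | base => simp [alphaW_self, alphaT_one]
  | succ n hn ih =>
    rw [sum_Icc_succ_top (by omega), alphaW_self H (by omega),
      sum_congr rfl fun i hi => alphaW_succ H (mem_Icc.mp hi).1 (mem_Icc.mp hi).2,
      ← sum_mul, ih]
    ring

end LearningRate

theorem alphaW_max_and_sq_sum_bounds_general (H : ℕ) (hH : 1 ≤ H) (n : ℕ) :
    (∀ i ∈ Finset.Icc 1 n, alphaW H n i ≤ 2 * H / n) ∧
    ∑ i ∈ Finset.Icc 1 n, (alphaW H n i) ^ 2 ≤ 2 * H / n := by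
  obtain rfl | hn := n.eq_zero_or_pos
  · simp
  have hmax : ∀ i ∈ Icc 1 n, alphaW H n i ≤ 2 * H / n := fun i hi =>
    (alphaW_le_alphaT H (mem_Icc.mp hi).1 (mem_Icc.mp hi).2).trans (alphaT_le_two_mul_div H hH hn)
  refine ⟨hmax, ?_⟩
  calc ∑ i ∈ Icc 1 n, alphaW H n i ^ 2
      ≤ 2 * H / n * ∑ i ∈ Icc 1 n, alphaW H n i :=
        sum_sq_le_mul_sum _ _ _ (fun i _ => alphaW_nonneg H n i) hmax
    _ = 2 * H / n := by rw [sum_alphaW_eq_one H hn, mul_one]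

/-- For every `n ≥ 1`, `max_{1 ≤ i ≤ n} α_n^i ≤ 2H/n` and `∑_{i=1}^n (α_n^i)² ≤ 2H/n`. -/
theorem alphaW_max_and_sq_sum_bounds (H : ℕ) (hH : 1 ≤ H) (n : ℕ) (hn : 1 ≤ n) :
    (∀ i ∈ Finset.Icc 1 n, alphaW H n i ≤ 2 * H / n) ∧
    ∑ i ∈ Finset.Icc 1 n, (alphaW H n i) ^ 2 ≤ 2 * H / n :=
  alphaW_max_and_sq_sum_bounds_general H hH n
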